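/- arXiv:1901.06087 — 2 statements merged into one kernel-verified Lean document; each statement's English description precedes it below -/
import Mathlib

section
/- Hoeffding's inequality for supermartingales: Let {X_n} be a supermartingale with respect to a filtration {F_n}, with X_0 a constant random variable, and suppose X_{n+1} − X_n ∈ [a_n, b_n] almost surely for all n, where each interval [a_n,b_n] has positive length. Then for all n ∈ ℕ and λ > 0, P(X_n − X_0 ≥ λ) ≤ exp(−2λ² / Σ_{k=1}^n (b_k − a_k)²). -/
/-
Azuma–Hoeffding. Write `Δ = X (n+1) - X n ∈ [a, b]` and take `t ≥ 0`. By convexity, `exp (t Δ)`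
lies below its chord `α + β Δ` over `[a, b]` with `β ≥ 0`, so the supermartingale property
`E[Δ | ℱ n] ≤ 0` gives `E[exp (t Δ) | ℱ n] ≤ α`. Since `E Δ ≤ 0` forces `a ≤ 0`, the number `α` is
(when `b ≥ 0`) the moment generating function of the mean-zero law on `{a, b}`, which Hoeffding's
lemma bounds by `exp (t² (b - a)² / 8)`. Iterating, the mgf of `X n - X 0` is at most
`exp (t² S / 8)` with `S = ∑ (b k - a k)²`, and Chernoff's bound at `t = 4 λ / S` finishes.
-/

open Real MeasureTheory ProbabilityTheory

theorem exp_mul_le_chord {a b x : ℝ} (t : ℝ) (hab : a < b) (hx : x ∈ Set.Icc a b) :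
    exp (t * x) ≤ ((b - x) * exp (t * a) + (x - a) * exp (t * b)) / (b - a) := by
  have hba : 0 < b - a := sub_pos.2 hab
  have h := convexOn_exp.2 (Set.mem_univ (t * a)) (Set.mem_univ (t * b))
    (div_nonneg (sub_nonneg.2 hx.2) hba.le) (div_nonneg (sub_nonneg.2 hx.1) hba.le)
    (by field_simp; ring)
  have harg : (b - x) / (b - a) * (t * a) + (x - a) / (b - a) * (t * b) = t * x := by
    field_simp; ring
  simp only [smul_eq_mul, harg] at h
  exact h.trans_eq (by ring)

theorem two_point_mgf_le {a b : ℝ} (t : ℝ) (ha : a ≤ 0) (hb : 0 ≤ b) (hab : a < b) :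
    (b * exp (t * a) - a * exp (t * b)) / (b - a) ≤ exp (t ^ 2 * (b - a) ^ 2 / 8) := by
  have hba : 0 < b - a := sub_pos.2 hab
  set p := -a / (b - a) with hp
  have hp0 : 0 ≤ p := div_nonneg (by linarith) hba.le
  have hp1 : 0 ≤ 1 - p := by rw [hp]; field_simp; linarith
  -- `ν` is the law on `{a, b}` with mean zero; its mgf at `t` is the left-hand side.
  let ν : Measure ℝ := ENNReal.ofReal (1 - p) • Measure.dirac a + ENNReal.ofReal p • Measure.dirac b
  have hν : IsProbabilityMeasure ν := by
    constructor
    simp only [ν, Measure.add_apply, Measure.smul_apply,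
      Measure.dirac_apply_of_mem (Set.mem_univ _), smul_eq_mul, mul_one]
    rw [← ENNReal.ofReal_add hp1 hp0]
    simp
  have hint (f : ℝ → ℝ) : ∫ x, f x ∂ν = (1 - p) * f a + p * f b := by
    rw [integral_add_measure, integral_smul_measure, integral_smul_measure, integral_dirac,
      integral_dirac]
    · simp [ENNReal.toReal_ofReal hp0, ENNReal.toReal_ofReal hp1]
    all_goals exact (integrable_dirac enorm_lt_top).smul_measure ENNReal.ofReal_ne_top
  have hsupp : ∀ᵐ x ∂ν, x ∈ Set.Icc a b := by
    rw [ae_add_measure_iff]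
    exact ⟨Measure.ae_smul_measure (by simp [hab.le]) _,
      Measure.ae_smul_measure (by simp [hab.le]) _⟩
  have hmean : ν[id] = 0 := by
    rw [hint]
    simp only [id, hp]
    field_simp
    ring
  have h := (hasSubgaussianMGF_of_mem_Icc_of_integral_eq_zero aemeasurable_id hsupp hmean).mgf_le t
  rw [mgf, hint] at h
  calc _ = (1 - p) * exp (t * a) + p * exp (t * b) := by simp only [hp]; field_simp; ring
    _ ≤ _ := h
    _ = _ := by
      congr 1
      push_cast
      rw [Real.norm_eq_abs, div_pow, sq_abs]
      ring

section

variable {Ω : Type*} {m m0 : MeasurableSpace Ω} {μ : Measure Ω} {Y Δ : Ω → ℝ}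

theorem integral_mul_nonpos_of_condExp_nonpos [IsFiniteMeasure μ] (hm : m ≤ m0)
    (hY : StronglyMeasurable[m] Y) (hY0 : 0 ≤ Y) (hYΔ : Integrable (Y * Δ) μ)
    (hΔ : Integrable Δ μ) (hc : μ[Δ|m] ≤ᵐ[μ] 0) :
    ∫ ω, Y ω * Δ ω ∂μ ≤ 0 := by
  change ∫ ω, (Y * Δ) ω ∂μ ≤ 0
  rw [← integral_condExp hm]
  refine integral_nonpos_of_ae ?_
  filter_upwards [condExp_mul_of_stronglyMeasurable_left hY hYΔ hΔ, hc] with ω hpull hω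
  rw [hpull]
  exact mul_nonpos_of_nonneg_of_nonpos (hY0 ω) hω

theorem le_zero_of_condExp_nonpos [IsProbabilityMeasure μ] (hm : m ≤ m0) {a : ℝ}
    (hΔ : Integrable Δ μ) (ha : ∀ᵐ ω ∂μ, a ≤ Δ ω) (hc : μ[Δ|m] ≤ᵐ[μ] 0) : a ≤ 0 :=
  calc a = ∫ _, a ∂μ := by simp
    _ ≤ ∫ ω, Δ ω ∂μ := integral_mono_ae (integrable_const a) hΔ ha
    _ = ∫ ω, (1 : Ω → ℝ) ω * Δ ω ∂μ := by simp
    _ ≤ 0 := integral_mul_nonpos_of_condExp_nonpos hm stronglyMeasurable_one zero_le_one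
      (by rwa [one_mul]) hΔ hc

theorem MeasureTheory.Integrable.mul_exp_mul_of_ae_le {b t : ℝ} (hY : Integrable Y μ)
    (hΔ : AEStronglyMeasurable Δ μ) (hb : ∀ᵐ ω ∂μ, Δ ω ≤ b) (ht : 0 ≤ t) :
    Integrable (fun ω ↦ Y ω * exp (t * Δ ω)) μ := by
  refine hY.mul_bdd (c := exp (t * b)) (continuous_exp.comp_aestronglyMeasurable
    (hΔ.const_mul t)) ?_
  filter_upwards [hb] with ω hω
  rw [norm_of_nonneg (exp_nonneg _)]
  gcongr

theorem integral_mul_exp_mul_le [IsProbabilityMeasure μ] (hm : m ≤ m0) {a b t : ℝ}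
    (hY : StronglyMeasurable[m] Y) (hY0 : 0 ≤ Y) (hYint : Integrable Y μ)
    (hΔ : Integrable Δ μ) (hΔab : ∀ᵐ ω ∂μ, Δ ω ∈ Set.Icc a b) (hc : μ[Δ|m] ≤ᵐ[μ] 0)
    (ht : 0 ≤ t) :
    ∫ ω, Y ω * exp (t * Δ ω) ∂μ ≤ exp (t ^ 2 * (b - a) ^ 2 / 8) * ∫ ω, Y ω ∂μ := by
  have hint := hYint.mul_exp_mul_of_ae_le hΔ.aestronglyMeasurable (hΔab.mono fun _ h ↦ h.2) ht
  have hYpos : 0 ≤ ∫ ω, Y ω ∂μ := integral_nonneg hY0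
  rcases le_or_gt b 0 with hb | hb
  · calc ∫ ω, Y ω * exp (t * Δ ω) ∂μ ≤ ∫ ω, Y ω ∂μ := by
          refine integral_mono_ae hint hYint ?_
          filter_upwards [hΔab] with ω hω
          exact mul_le_of_le_one_right (hY0 ω)
            (exp_le_one_iff.2 (mul_nonpos_of_nonneg_of_nonpos ht (hω.2.trans hb)))
      _ ≤ exp (t ^ 2 * (b - a) ^ 2 / 8) * ∫ ω, Y ω ∂μ :=
          le_mul_of_one_le_left hYpos (one_le_exp (by positivity))
  have ha : a ≤ 0 := le_zero_of_condExp_nonpos hm hΔ (hΔab.mono fun _ h ↦ h.1) hc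
  have hab : a < b := ha.trans_lt hb
  set α := (b * exp (t * a) - a * exp (t * b)) / (b - a)
  set β := (exp (t * b) - exp (t * a)) / (b - a)
  have hβ : 0 ≤ β := div_nonneg (sub_nonneg.2 (exp_le_exp.2 (by gcongr))) (sub_pos.2 hab).le
  have hYΔ : Integrable (Y * Δ) μ := hYint.mul_bdd hΔ.aestronglyMeasurable
    (hΔab.mono fun _ h ↦ (Real.norm_eq_abs _).trans_le (abs_le_max_abs_abs h.1 h.2))
  calc ∫ ω, Y ω * exp (t * Δ ω) ∂μ ≤ ∫ ω, (α * Y ω + β * (Y * Δ) ω) ∂μ := by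
        refine integral_mono_ae hint ((hYint.const_mul α).add (hYΔ.const_mul β)) ?_
        filter_upwards [hΔab] with ω hω
        calc Y ω * exp (t * Δ ω)
            ≤ Y ω * (((b - Δ ω) * exp (t * a) + (Δ ω - a) * exp (t * b)) / (b - a)) :=
              mul_le_mul_of_nonneg_left (exp_mul_le_chord t hab hω) (hY0 ω)
          _ = α * Y ω + β * (Y * Δ) ω := by simp only [α, β, Pi.mul_apply]; ring
    _ = α * ∫ ω, Y ω ∂μ + β * ∫ ω, Y ω * Δ ω ∂μ := by
        rw [integral_add (hYint.const_mul α) (hYΔ.const_mul β), integral_const_mul,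
          integral_const_mul]; rfl
    _ ≤ α * ∫ ω, Y ω ∂μ := add_le_of_nonpos_right (mul_nonpos_of_nonneg_of_nonpos hβ
        (integral_mul_nonpos_of_condExp_nonpos hm hY hY0 hYΔ hΔ hc))
    _ ≤ exp (t ^ 2 * (b - a) ^ 2 / 8) * ∫ ω, Y ω ∂μ :=
        mul_le_mul_of_nonneg_right (two_point_mgf_le t ha hb.le hab) hYpos

theorem MeasureTheory.Supermartingale.condExp_sub_nonpos {ℱ : Filtration ℕ m0}
    {X : ℕ → Ω → ℝ} (hsm : Supermartingale X ℱ μ) (n : ℕ) :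
    μ[X (n + 1) - X n|ℱ n] ≤ᵐ[μ] 0 := by
  have h := hsm.neg.condExp_sub_nonneg (Nat.le_add_right n 1)
  have hneg : (-X) (n + 1) - (-X) n = -(X (n + 1) - X n) := by simp only [Pi.neg_apply]; abel
  rw [hneg] at h
  filter_upwards [h, condExp_neg (X (n + 1) - X n) (ℱ n : MeasurableSpace Ω)] with ω hω hω'
  rw [hω'] at hω
  simpa using hω

theorem MeasureTheory.Supermartingale.mgf_sub_le [IsProbabilityMeasure μ] {ℱ : Filtration ℕ m0}
    {X : ℕ → Ω → ℝ} {a b : ℕ → ℝ} (hsm : Supermartingale X ℱ μ)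
    (hdiff : ∀ n, ∀ᵐ ω ∂μ, X (n + 1) ω - X n ω ∈ Set.Icc (a (n + 1)) (b (n + 1)))
    {t : ℝ} (ht : 0 ≤ t) (n : ℕ) :
    Integrable (fun ω ↦ exp (t * (X n ω - X 0 ω))) μ ∧
      mgf (fun ω ↦ X n ω - X 0 ω) μ t ≤
        exp (t ^ 2 * (∑ k ∈ Finset.Icc 1 n, (b k - a k) ^ 2) / 8) := by
  induction n with
  | zero => simp [mgf]
  | succ n ih =>
    obtain ⟨hint, hmgf⟩ := ih
    have hY : StronglyMeasurable[ℱ n] fun ω ↦ exp (t * (X n ω - X 0 ω)) :=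
      continuous_exp.comp_stronglyMeasurable (((hsm.stronglyAdapted n).sub
        ((hsm.stronglyAdapted 0).mono (ℱ.mono n.zero_le))).const_mul t)
    have hΔ : Integrable (X (n + 1) - X n) μ := (hsm.integrable _).sub (hsm.integrable _)
    have hsplit : (fun ω ↦ exp (t * (X (n + 1) ω - X 0 ω))) =
        fun ω ↦ exp (t * (X n ω - X 0 ω)) * exp (t * (X (n + 1) - X n) ω) := by
      funext ω
      rw [← exp_add, Pi.sub_apply]
      ring_nf
    rw [mgf, hsplit]
    refine ⟨hint.mul_exp_mul_of_ae_le hΔ.aestronglyMeasurable ((hdiff n).mono fun _ h ↦ h.2) ht,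
      ?_⟩
    calc _ ≤ exp (t ^ 2 * (b (n + 1) - a (n + 1)) ^ 2 / 8) * mgf (fun ω ↦ X n ω - X 0 ω) μ t :=
          integral_mul_exp_mul_le (ℱ.le n) hY (fun _ ↦ exp_nonneg _) hint hΔ (hdiff n)
            (hsm.condExp_sub_nonpos n) ht
      _ ≤ exp (t ^ 2 * (b (n + 1) - a (n + 1)) ^ 2 / 8) *
            exp (t ^ 2 * (∑ k ∈ Finset.Icc 1 n, (b k - a k) ^ 2) / 8) := by gcongr
      _ = exp (t ^ 2 * (∑ k ∈ Finset.Icc 1 (n + 1), (b k - a k) ^ 2) / 8) := by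
          rw [← exp_add, Finset.sum_Icc_succ_top (by omega)]
          ring_nf

end

theorem stmt1_general {Ω : Type*} {m0 : MeasurableSpace Ω} {μ : Measure Ω} [IsProbabilityMeasure μ]
    (ℱ : Filtration ℕ m0) (X : ℕ → Ω → ℝ) (a b : ℕ → ℝ)
    (hsm : Supermartingale X ℱ μ)
    (hdiff : ∀ n, ∀ᵐ ω ∂μ, X (n + 1) ω - X n ω ∈ Set.Icc (a (n + 1)) (b (n + 1))) :
    ∀ n : ℕ, ∀ lam : ℝ, 0 < lam →
      μ {ω | lam ≤ X n ω - X 0 ω} ≤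
        ENNReal.ofReal
          (Real.exp (-(2 * lam ^ 2) / ∑ k ∈ Finset.Icc 1 n, (b k - a k) ^ 2)) := by
  intro n lam hlam
  set S := ∑ k ∈ Finset.Icc 1 n, (b k - a k) ^ 2
  have hS0 : 0 ≤ S := Finset.sum_nonneg fun k _ ↦ sq_nonneg (b k - a k)
  rcases hS0.eq_or_lt with hS | hS
  · rw [← hS, div_zero, exp_zero, ENNReal.ofReal_one]
    exact prob_le_one
  -- `t = 4 λ / S` minimises the Chernoff exponent `-t λ + t² S / 8`.
  set t := 4 * lam / S
  have ht : 0 < t := by positivity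
  obtain ⟨hint, hmgf⟩ := hsm.mgf_sub_le hdiff ht.le n
  rw [← ofReal_measureReal]
  refine ENNReal.ofReal_le_ofReal ?_
  calc μ.real {ω | lam ≤ X n ω - X 0 ω} ≤ exp (-t * lam) * mgf (fun ω ↦ X n ω - X 0 ω) μ t :=
        measure_ge_le_exp_mul_mgf lam ht.le hint
    _ ≤ exp (-t * lam) * exp (t ^ 2 * S / 8) := by gcongr
    _ = exp (-(2 * lam ^ 2) / S) := by
        rw [← exp_add]
        congr 1
        simp only [t]
        field_simp
        ring

/-- Hoeffding's inequality for supermartingales: if `{X n}` is a supermartingale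
with `X 0` constant and `X (n+1) - X n ∈ [a (n+1), b (n+1)]` a.s. for all `n` (each interval of
positive length), then for all `n` and `λ > 0`,
`P(X n - X 0 ≥ λ) ≤ exp (-2 λ² / ∑_{k=1}^n (b k - a k)²)`. -/
theorem stmt1 {Ω : Type*} {m0 : MeasurableSpace Ω} {μ : Measure Ω} [IsProbabilityMeasure μ]
    (ℱ : Filtration ℕ m0) (X : ℕ → Ω → ℝ) (a b : ℕ → ℝ) (x0 : ℝ)
    (hab : ∀ n, a n < b n)
    (hsm : Supermartingale X ℱ μ)
    (hX0 : ∀ ω, X 0 ω = x0)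
    (hdiff : ∀ n, ∀ᵐ ω ∂μ, X (n + 1) ω - X n ω ∈ Set.Icc (a (n + 1)) (b (n + 1))) :
    ∀ n : ℕ, ∀ lam : ℝ, 0 < lam →
      μ {ω | lam ≤ X n ω - X 0 ω} ≤
        ENNReal.ofReal
          (Real.exp (-(2 * lam ^ 2) / ∑ k ∈ Finset.Icc 1 n, (b k - a k) ^ 2)) :=
  stmt1_general ℱ X a b hsm hdiff
end

section
/- Soundness of descent supermartingale maps: Let P = while(G, P′) be a probabilistic while loop such that P′ terminates almost surely for every initial valuation and scheduler, and suppose there exists a DSM-map η for P with parameters ε > 0, c ∈ ℝ, interval [a,b]. Then for every initial valuation ν* and every scheduler σ, P^σ_{ν*}(T < ∞) = 1, i.e., P terminates almost surely. -/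
/-!
The process `X = dsmProc C η ε lab vl` has increments in `[a, b]` and conditional drift at
most `-ε`. In its Doob decomposition the predictable part is at most `-ε n`, while the
martingale part has bounded increments, hence second moment `O(n)`: Chebyshev along the
squares `n = k²` and Borel–Cantelli, with the bounded increments bridging the gaps between
squares, show that it is eventually below `ε n / 2`. So `X n → -∞` almost surely. On a run
that never reaches `lout`, the loop head is visited infinitely often and each visit enters the
body, so (D5) gives `c ≤ X n` at every such visit, which is impossible.
-/

open MeasureTheory Filter
open scoped Classical

/-- The kind of statement attached to a label of a control-flow graph: an assignment with an
update function and successor label, a conditional branch, a nondeterministic branch, a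
probabilistic branch with probability `p`, or the terminal label. -/
inductive LabelKind (Val : Type*) (SVal : Type*) (L : Type*) where
  | assign (u : Val → SVal → Val) (next : L)
  | branch (φ : Val → Prop) (lthen lelse : L)
  | nondet (lthen lelse : L)
  | prob (p : ℝ) (lthen lelse : L)
  | terminal

/-- The control-flow graph of a probabilistic while loop `while G do P' od` : each label has a
kind, `lin` is the initial label (the loop head, a conditional branch on the guard `G` going
to the loop body `lbody` or to the terminal label `lout`), and `dist` is the (discrete)
probability distribution of the sampling valuations. -/
structure PWhileCFG (Val : Type*) (SVal : Type*) (L : Type*) where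
  kind : L → LabelKind Val SVal L
  lin : L
  lout : L
  lbody : L
  guard : Val → Prop
  dist : SVal → ℝ
  dist_nonneg : ∀ s, 0 ≤ dist s
  dist_sum : ∑' s, dist s = 1
  entry : kind lin = LabelKind.branch guard lbody lout
  exit : kind lout = LabelKind.terminal

/-- Conditions (D1)–(D5) of a descent supermartingale map `η` with parameters `ε, c, [a, b]`
w.r.t. the invariant `I`. -/
def IsDSM {Val SVal L : Type*} (C : PWhileCFG Val SVal L) (I : L → Set Val)
    (η : L → Val → ℝ) (ε c a b : ℝ) : Prop :=
  (∀ ℓ u next, C.kind ℓ = LabelKind.assign u next → ∀ ν ∈ I ℓ,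
      (∀ s, η next (u ν s) - η ℓ ν ∈ Set.Icc a b) ∧
      (∑' s, C.dist s * η next (u ν s)) ≤ η ℓ ν - ε) ∧
  (∀ ℓ φ l1 l2, C.kind ℓ = LabelKind.branch φ l1 l2 → ∀ ν ∈ I ℓ,
      (φ ν → η l1 ν - η ℓ ν ∈ Set.Icc a (min (-ε) b)) ∧
      (¬ φ ν → η l2 ν - η ℓ ν ∈ Set.Icc a (min (-ε) b))) ∧
  (∀ ℓ l1 l2, C.kind ℓ = LabelKind.nondet l1 l2 → ∀ ν ∈ I ℓ,
      η l1 ν - η ℓ ν ∈ Set.Icc a (min (-ε) b) ∧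
      η l2 ν - η ℓ ν ∈ Set.Icc a (min (-ε) b)) ∧
  (∀ ℓ p l1 l2, C.kind ℓ = LabelKind.prob p l1 l2 → ∀ ν ∈ I ℓ,
      η l1 ν - η ℓ ν ∈ Set.Icc a b ∧ η l2 ν - η ℓ ν ∈ Set.Icc a b ∧
      p * η l1 ν + (1 - p) * η l2 ν ≤ η ℓ ν - ε) ∧
  (∀ ν ∈ I C.lin, C.guard ν → c ≤ η C.lin ν)

/-- The process `X n = η (ℓ n, ν n)` along a run, with the convention that after termination
(i.e. at the terminal label) the value keeps decreasing by `ε` at each step. -/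
noncomputable def dsmProc {Val SVal L Ω : Type*} (C : PWhileCFG Val SVal L)
    (η : L → Val → ℝ) (ε : ℝ) (lab : ℕ → Ω → L) (vl : ℕ → Ω → Val) (n : ℕ) (ω : Ω) : ℝ :=
  η (lab n ω) (vl n ω) -
    ε * ∑ k ∈ Finset.range n,
      (if C.kind (lab k ω) = LabelKind.terminal then (1 : ℝ) else 0)

theorem le_add_mul_of_forall_sub_le {s : ℕ → ℝ} {R : ℝ} (hs : ∀ n, s (n + 1) - s n ≤ R)
    (m j : ℕ) : s (m + j) ≤ s m + j * R := by
  induction j with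
  | zero => simp
  | succ j ih =>
    rw [← add_assoc]
    push_cast
    linarith [hs (m + j)]

theorem eventually_le_mul_of_eventually_sq_le {s : ℕ → ℝ} {R δ : ℝ} (hδ : 0 < δ)
    (hs : ∀ n, s (n + 1) - s n ≤ R) (hsq : ∀ᶠ k in atTop, s (k ^ 2) ≤ δ / 2 * k ^ 2) :
    ∀ᶠ n in atTop, s n ≤ δ * n := by
  -- with `k = ⌊√n⌋`, the `n - k² ≤ 2k` steps after `k²` add at most `2kR ≤ δk²/2`
  obtain ⟨K, hK⟩ := eventually_atTop.1 (hsq.and (eventually_ge_atTop ⌈4 * R / δ⌉₊))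
  refine eventually_atTop.2 ⟨K ^ 2, fun n hn => ?_⟩
  set k := Nat.sqrt n
  obtain ⟨hk, hkR⟩ := hK k (Nat.le_sqrt'.2 hn)
  have hkn : k ^ 2 ≤ n := Nat.sqrt_le' n
  have hnk : n ≤ k * k + k + k := Nat.sqrt_le_add n
  have hstep := le_add_mul_of_forall_sub_le hs (k ^ 2) (n - k ^ 2)
  rw [Nat.add_sub_cancel' hkn, Nat.cast_sub hkn] at hstep
  have hRk : 4 * R ≤ δ * k := by
    have := (div_le_iff₀' hδ).1 ((Nat.le_ceil _).trans (Nat.cast_le.2 hkR))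
    linarith
  have hkn' : ((k : ℝ) ^ 2) ≤ n := by exact_mod_cast hkn
  have hnk' : (n : ℝ) ≤ k ^ 2 + 2 * k := by rw [sq, two_mul, ← add_assoc]; exact_mod_cast hnk
  push_cast at hstep
  rcases le_total 0 R with hR | hR
  · nlinarith [mul_le_mul_of_nonneg_right (sub_le_iff_le_add'.2 hnk') hR]
  · nlinarith [mul_nonneg (sub_nonneg.2 hkn') (neg_nonneg.2 hR)]

theorem abs_sub_zero_le_mul {s : ℕ → ℝ} {R : ℝ} (hs : ∀ i, |s (i + 1) - s i| ≤ R) (n : ℕ) :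
    |s n - s 0| ≤ n * R := by
  simpa [Real.dist_eq, abs_sub_comm] using
    dist_le_range_sum_of_dist_le (f := s) (d := fun _ => R) n fun _ => by
      simpa [Real.dist_eq, abs_sub_comm] using hs _

namespace MeasureTheory

theorem condExp_ae_le_of_ae_or {Ω : Type*} {m m0 : MeasurableSpace Ω} {μ : Measure Ω}
    (hm : m ≤ m0) [SigmaFinite (μ.trim hm)] {Y q : Ω → ℝ} (hY : Integrable Y μ)
    (hq : StronglyMeasurable[m] q) (hqi : Integrable q μ)
    (h : ∀ᵐ ω ∂μ, μ[Y|m] ω ≤ q ω ∨ Y ω ≤ q ω) :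
    μ[Y|m] ≤ᵐ[μ] q := by
  set B := {ω | q ω < μ[Y|m] ω}
  have hB : MeasurableSet[m] B :=
    measurableSet_lt hq.measurable stronglyMeasurable_condExp.measurable
  -- on `B` the first alternative fails, so `Y ≤ q` there, and conditioning preserves this on `B`
  have hle : B.indicator (μ[Y|m]) ≤ᵐ[μ] B.indicator q := by
    have hYq : B.indicator Y ≤ᵐ[μ] B.indicator q := by
      filter_upwards [h] with ω hω
      by_cases hω' : ω ∈ B
      · simp only [Set.indicator_of_mem hω']
        exact hω.resolve_left (not_le.2 hω')
      · simp [Set.indicator_of_notMem hω']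
    filter_upwards [condExp_indicator hY hB, condExp_mono (hY.indicator (hm _ hB))
      (hqi.indicator (hm _ hB)) hYq] with ω h1 h2
    rwa [← h1, ← condExp_of_stronglyMeasurable hm (hq.indicator hB) (hqi.indicator (hm _ hB))]
  filter_upwards [hle] with ω hω
  by_contra hlt
  have hω' : ω ∈ B := not_le.1 hlt
  simp only [Set.indicator_of_mem hω'] at hω
  exact hlt hω

variable {Ω : Type*} {m0 : MeasurableSpace Ω} {μ : Measure Ω} {ℱ : Filtration ℕ m0}
  {M : ℕ → Ω → ℝ} {R : ℝ}

theorem meas_ge_le_integral_sq_div_sq [IsFiniteMeasure μ] {f : Ω → ℝ}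
    (hf : Integrable (fun ω => f ω ^ 2) μ) {r : ℝ} (hr : 0 < r) :
    μ {ω | r ≤ f ω} ≤ ENNReal.ofReal ((∫ ω, f ω ^ 2 ∂μ) / r ^ 2) := by
  have hmarkov := mul_meas_ge_le_integral_of_nonneg (ae_of_all μ fun ω => sq_nonneg (f ω)) hf
    (r ^ 2)
  calc μ {ω | r ≤ f ω} ≤ μ {ω | r ^ 2 ≤ f ω ^ 2} :=
        measure_mono <| Set.ofPred_subset_ofPred.2 fun ω hω => pow_le_pow_left₀ hr.le hω 2
    _ = ENNReal.ofReal (μ.real {ω | r ^ 2 ≤ f ω ^ 2}) := (ofReal_measureReal).symm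
    _ ≤ _ := ENNReal.ofReal_le_ofReal ((le_div_iff₀' (by positivity)).2 hmarkov)

theorem memLp_top_sub_zero (hM : ∀ n, AEStronglyMeasurable (M n) μ)
    (hinc : ∀ᵐ ω ∂μ, ∀ i, |M (i + 1) ω - M i ω| ≤ R) (n : ℕ) :
    MemLp (M n - M 0) ⊤ μ :=
  memLp_top_of_bound ((hM n).sub (hM 0)) (n * R)
    (hinc.mono fun _ hω => by simpa using abs_sub_zero_le_mul (s := (M · _)) hω n)

namespace Martingale

theorem integral_mul_sub_eq_zero [IsFiniteMeasure μ] (hM : Martingale M ℱ μ) {n : ℕ}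
    {D : Ω → ℝ} (hD : StronglyMeasurable[ℱ n] D) (hDΔ : Integrable (D * (M (n + 1) - M n)) μ) :
    ∫ ω, D ω * (M (n + 1) ω - M n ω) ∂μ = 0 := by
  have hΔ0 : μ[M (n + 1) - M n|ℱ n] =ᵐ[μ] 0 := by
    filter_upwards [condExp_sub (hM.integrable (n + 1)) (hM.integrable n) (ℱ n),
      hM.condExp_ae_eq n.le_succ] with ω h1 h2
    simp [h1, h2, condExp_of_stronglyMeasurable (ℱ.le n) (hM.stronglyMeasurable n)
      (hM.integrable n)]
  change ∫ ω, (D * (M (n + 1) - M n)) ω ∂μ = 0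
  rw [← integral_condExp (ℱ.le n)]
  refine integral_eq_zero_of_ae ?_
  filter_upwards [condExp_mul_of_stronglyMeasurable_left hD hDΔ
    ((hM.integrable _).sub (hM.integrable _)), hΔ0] with ω h1 h2
  rw [h1, Pi.mul_apply, h2]
  simp

theorem integral_sq_sub_zero_le [IsProbabilityMeasure μ] (hM : Martingale M ℱ μ)
    (hinc : ∀ᵐ ω ∂μ, ∀ i, |M (i + 1) ω - M i ω| ≤ R) (n : ℕ) :
    ∫ ω, (M n ω - M 0 ω) ^ 2 ∂μ ≤ n * R ^ 2 := by
  induction n with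
  | zero => simp
  | succ n ih =>
    have hLp := memLp_top_sub_zero (fun i => (hM.integrable i).aestronglyMeasurable) hinc
    set D := M n - M 0
    set Δ := M (n + 1) - M n
    have hD : MemLp D 2 μ := (hLp n).mono_exponent le_top
    have hΔ : MemLp Δ 2 μ := by simpa [D, Δ] using ((hLp (n + 1)).sub (hLp n)).mono_exponent le_top
    have hDΔ : Integrable (D * Δ) μ := hD.integrable_mul hΔ
    have hcross : ∫ ω, D ω * Δ ω ∂μ = 0 := hM.integral_mul_sub_eq_zero
      ((hM.stronglyMeasurable n).sub ((hM.stronglyMeasurable 0).mono (ℱ.mono n.zero_le))) hDΔ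
    have hΔsq : ∫ ω, Δ ω ^ 2 ∂μ ≤ R ^ 2 := by
      calc ∫ ω, Δ ω ^ 2 ∂μ ≤ ∫ _, R ^ 2 ∂μ := by
            refine integral_mono_ae hΔ.integrable_sq (integrable_const _) ?_
            filter_upwards [hinc] with ω hω
            rw [← sq_abs]
            exact pow_le_pow_left₀ (abs_nonneg _) (hω n) 2
        _ = R ^ 2 := by simp
    have hexp : ∀ ω, (M (n + 1) ω - M 0 ω) ^ 2 = D ω ^ 2 + 2 * (D ω * Δ ω) + Δ ω ^ 2 :=
      fun ω => by simp only [D, Δ, Pi.sub_apply]; ring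
    simp_rw [hexp]
    rw [integral_add (f := fun ω => D ω ^ 2 + 2 * (D ω * Δ ω)) (g := fun ω => Δ ω ^ 2)
      (hD.integrable_sq.add (hDΔ.const_mul 2)) hΔ.integrable_sq,
      integral_add (f := fun ω => D ω ^ 2) (g := fun ω => 2 * (D ω * Δ ω)) hD.integrable_sq
        (hDΔ.const_mul 2), integral_const_mul, hcross]
    have hD2 : ∫ ω, D ω ^ 2 ∂μ ≤ n * R ^ 2 := ih
    push_cast
    linarith

theorem ae_eventually_sub_zero_lt_mul_sq [IsProbabilityMeasure μ] (hM : Martingale M ℱ μ)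
    (hinc : ∀ᵐ ω ∂μ, ∀ i, |M (i + 1) ω - M i ω| ≤ R) {δ : ℝ} (hδ : 0 < δ) :
    ∀ᵐ ω ∂μ, ∀ᶠ k in atTop, M (k ^ 2) ω - M 0 ω < δ * k ^ 2 := by
  set E : ℕ → Set Ω :=
    fun k => {ω | δ * ((k + 1 : ℕ) : ℝ) ^ 2 ≤ M ((k + 1) ^ 2) ω - M 0 ω}
  have hE : ∀ k, μ (E k) ≤ ENNReal.ofReal ((R / δ) ^ 2 * (1 / ((k + 1 : ℕ) : ℝ) ^ 2)) := by
    intro k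
    have hk : (0 : ℝ) < ((k + 1 : ℕ) : ℝ) := by positivity
    have hLp := memLp_top_sub_zero (fun i => (hM.integrable i).aestronglyMeasurable) hinc
      ((k + 1) ^ 2)
    refine (meas_ge_le_integral_sq_div_sq (hLp.mono_exponent le_top).integrable_sq
      (by positivity)).trans (ENNReal.ofReal_le_ofReal ?_)
    calc (∫ ω, (M ((k + 1) ^ 2) ω - M 0 ω) ^ 2 ∂μ) / (δ * ((k + 1 : ℕ) : ℝ) ^ 2) ^ 2
        ≤ (((k + 1) ^ 2 : ℕ) * R ^ 2) / (δ * ((k + 1 : ℕ) : ℝ) ^ 2) ^ 2 :=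
          div_le_div_of_nonneg_right (hM.integral_sq_sub_zero_le hinc _) (by positivity)
      _ = _ := by push_cast; field_simp
  have hsummable : Summable fun k : ℕ => (R / δ) ^ 2 * (1 / ((k + 1 : ℕ) : ℝ) ^ 2) :=
    ((summable_nat_add_iff 1).2 (Real.summable_one_div_nat_pow.2 one_lt_two)).mul_left _
  have hsum : ∑' k, μ (E k) ≠ ⊤ :=
    ne_top_of_le_ne_top ENNReal.ofReal_ne_top ((ENNReal.tsum_le_tsum hE).trans_eq
      (ENNReal.ofReal_tsum_of_nonneg (fun _ => by positivity) hsummable).symm)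
  filter_upwards [ae_eventually_notMem hsum] with ω hω
  obtain ⟨K, hK⟩ := eventually_atTop.1 hω
  refine eventually_atTop.2 ⟨K + 1, fun k hk => ?_⟩
  obtain ⟨j, rfl⟩ : ∃ j, k = j + 1 := ⟨k - 1, by omega⟩
  simpa [E] using hK j (by omega)

theorem ae_eventually_sub_zero_le_mul [IsProbabilityMeasure μ] (hM : Martingale M ℱ μ)
    (hinc : ∀ᵐ ω ∂μ, ∀ i, |M (i + 1) ω - M i ω| ≤ R) {δ : ℝ} (hδ : 0 < δ) :
    ∀ᵐ ω ∂μ, ∀ᶠ n in atTop, M n ω - M 0 ω ≤ δ * n := by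
  filter_upwards [hM.ae_eventually_sub_zero_lt_mul_sq hinc (half_pos hδ), hinc] with ω hsq hω
  refine eventually_le_mul_of_eventually_sq_le hδ (R := R) (fun n => ?_)
    (hsq.mono fun k hk => ?_)
  · simpa using (abs_le.1 (hω n)).2
  · exact hk.le

end Martingale

theorem ae_tendsto_atBot_of_condExp_sub_le [IsProbabilityMeasure μ] {X : ℕ → Ω → ℝ} {ε : ℝ}
    (hε : 0 < ε) (hX : StronglyAdapted ℱ X) (hint : ∀ n, Integrable (X n) μ)
    (hinc : ∀ᵐ ω ∂μ, ∀ n, |X (n + 1) ω - X n ω| ≤ R)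
    (hdrift : ∀ n, μ[X (n + 1) - X n|ℱ n] ≤ᵐ[μ] fun _ => -ε) :
    ∀ᵐ ω ∂μ, Tendsto (X · ω) atTop atBot := by
  have hM : Martingale (martingalePart X ℱ μ) ℱ μ := martingale_martingalePart hX hint
  have hA : ∀ᵐ ω ∂μ, ∀ n, predictablePart X ℱ μ n ω ≤ -ε * n := by
    filter_upwards [ae_all_iff.2 hdrift] with ω hω n
    simp only [predictablePart, Finset.sum_apply]
    calc _ ≤ ∑ _ ∈ Finset.range n, -ε := Finset.sum_le_sum fun i _ => hω i
      _ = -ε * n := by simp [mul_comm]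
  have hMinc : ∀ᵐ ω ∂μ, ∀ i,
      |martingalePart X ℱ μ (i + 1) ω - martingalePart X ℱ μ i ω| ≤ 2 * R := by
    simpa only [Real.norm_eq_abs] using
      martingalePart_bdd_difference (f := X) (μ := μ) ℱ
        (by simpa only [Real.norm_eq_abs] using hinc)
  filter_upwards [hM.ae_eventually_sub_zero_le_mul hMinc (half_pos hε), hA] with ω hMω hAω
  have hlin : Tendsto (fun n : ℕ => X 0 ω + -(ε / 2) * n) atTop atBot :=
    tendsto_atBot_add_const_left _ _
      (tendsto_natCast_atTop_atTop.const_mul_atTop_of_neg (by linarith))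
  refine tendsto_atBot_mono' atTop (hMω.mono fun n hn => ?_) hlin
  have hdecomp := congrFun (congrFun (martingalePart_add_predictablePart ℱ μ X) n) ω
  simp only [Pi.add_apply, martingalePart_zero] at hdecomp hn
  linarith [hAω n]

end MeasureTheory

namespace PWhileCFG

variable {Val SVal L : Type*}

def Step (C : PWhileCFG Val SVal L) (ℓ : L) (ν : Val) (ℓ' : L) (ν' : Val) : Prop :=
  match C.kind ℓ with
  | .assign u next => ℓ' = next ∧ ∃ s, ν' = u ν s
  | .branch φ l1 l2 => ν' = ν ∧ ((φ ν ∧ ℓ' = l1) ∨ (¬ φ ν ∧ ℓ' = l2))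
  | .nondet l1 l2 => ν' = ν ∧ (ℓ' = l1 ∨ ℓ' = l2)
  | .prob _ l1 l2 => ν' = ν ∧ (ℓ' = l1 ∨ ℓ' = l2)
  | .terminal => ℓ' = ℓ ∧ ν' = ν

variable {C : PWhileCFG Val SVal L} {Ω : Type*} {lab : ℕ → Ω → L} {vl : ℕ → Ω → Val} {ω : Ω}

theorem lab_add_eq_of_kind_eq_terminal
    (hs : ∀ n, C.Step (lab n ω) (vl n ω) (lab (n + 1) ω) (vl (n + 1) ω)) {m : ℕ}
    (hm : C.kind (lab m ω) = .terminal) : ∀ j, lab (m + j) ω = lab m ω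
  | 0 => rfl
  | j + 1 => by
    have ih := lab_add_eq_of_kind_eq_terminal hs hm j
    have h := hs (m + j)
    simp only [Step, ih, hm] at h
    rw [← add_assoc, h.1]

theorem kind_ne_terminal_of_lt_of_lab_eq_lin
    (hs : ∀ n, C.Step (lab n ω) (vl n ω) (lab (n + 1) ω) (vl (n + 1) ω)) {k n : ℕ} (hkn : k < n)
    (hn : lab n ω = C.lin) : C.kind (lab k ω) ≠ .terminal := by
  intro hk
  have h := lab_add_eq_of_kind_eq_terminal hs hk (n - k)
  rw [Nat.add_sub_cancel' hkn.le, hn] at h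
  have hentry := C.entry
  rw [h, hk] at hentry
  cases hentry

end PWhileCFG

section DSMProcess

variable {Val SVal L Ω : Type*} {C : PWhileCFG Val SVal L} {I : L → Set Val} {η : L → Val → ℝ}
  {ε c a b : ℝ} {lab : ℕ → Ω → L} {vl : ℕ → Ω → Val}

theorem dsmProc_succ_sub (n : ℕ) (ω : Ω) :
    dsmProc C η ε lab vl (n + 1) ω - dsmProc C η ε lab vl n ω =
      η (lab (n + 1) ω) (vl (n + 1) ω) - η (lab n ω) (vl n ω) -
        ε * (if C.kind (lab n ω) = .terminal then 1 else 0) := by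
  simp only [dsmProc, Finset.sum_range_succ]
  ring

theorem dsmProc_eq_of_lab_eq_lin {ω : Ω}
    (hs : ∀ n, C.Step (lab n ω) (vl n ω) (lab (n + 1) ω) (vl (n + 1) ω)) {n : ℕ}
    (hn : lab n ω = C.lin) : dsmProc C η ε lab vl n ω = η (lab n ω) (vl n ω) := by
  rw [dsmProc, Finset.sum_eq_zero fun k hk =>
    if_neg (C.kind_ne_terminal_of_lt_of_lab_eq_lin hs (Finset.mem_range.1 hk) hn), mul_zero,
    sub_zero]

namespace IsDSM

variable {ℓ ℓ' : L} {ν ν' : Val}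

theorem sub_mem_Icc_of_step (hDSM : IsDSM C I η ε c a b) (haε : a ≤ -ε) (hεb : -ε ≤ b)
    (hI : ν ∈ I ℓ) (hs : C.Step ℓ ν ℓ' ν') :
    η ℓ' ν' - η ℓ ν - ε * (if C.kind ℓ = .terminal then 1 else 0) ∈ Set.Icc a b := by
  obtain ⟨hA, hB, hN, hP, -⟩ := hDSM
  have hmin : Set.Icc a (min (-ε) b) ⊆ Set.Icc a b := Set.Icc_subset_Icc_right (min_le_right _ _)
  unfold PWhileCFG.Step at hs
  cases hK : C.kind ℓ with
  | assign u next =>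
    rw [hK] at hs
    obtain ⟨rfl, s, rfl⟩ := hs
    simpa using (hA ℓ u _ hK _ hI).1 s
  | branch φ l1 l2 =>
    rw [hK] at hs
    obtain ⟨rfl, ⟨hφ, rfl⟩ | ⟨hφ, rfl⟩⟩ := hs
    · simpa using hmin ((hB ℓ φ _ _ hK _ hI).1 hφ)
    · simpa using hmin ((hB ℓ φ _ _ hK _ hI).2 hφ)
  | nondet l1 l2 =>
    rw [hK] at hs
    obtain ⟨rfl, rfl | rfl⟩ := hs
    · simpa using hmin (hN ℓ _ _ hK _ hI).1
    · simpa using hmin (hN ℓ _ _ hK _ hI).2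
  | prob p l1 l2 =>
    rw [hK] at hs
    obtain ⟨rfl, rfl | rfl⟩ := hs
    · simpa using (hP ℓ p _ _ hK _ hI).1
    · simpa using (hP ℓ p _ _ hK _ hI).2.1
  | terminal =>
    rw [hK] at hs
    obtain ⟨rfl, rfl⟩ := hs
    simpa using ⟨haε, hεb⟩

-- `G` stands for the expected next value of `η`: it is known at sampling and probabilistic
-- labels, while at the other labels the next value itself is bounded.
theorem expected_or_next_le (hDSM : IsDSM C I η ε c a b) (hI : ν ∈ I ℓ)
    (hs : C.Step ℓ ν ℓ' ν') {G : ℝ}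
    (hGA : ∀ u next, C.kind ℓ = .assign u next → G = ∑' s, C.dist s * η next (u ν s))
    (hGP : ∀ p l1 l2, C.kind ℓ = .prob p l1 l2 → G = p * η l1 ν + (1 - p) * η l2 ν) :
    G ≤ η ℓ ν + ε * (if C.kind ℓ = .terminal then 1 else 0) - ε ∨
      η ℓ' ν' ≤ η ℓ ν + ε * (if C.kind ℓ = .terminal then 1 else 0) - ε := by
  obtain ⟨hA, hB, hN, hP, -⟩ := hDSM
  have hmin : min (-ε) b ≤ -ε := min_le_left _ _
  unfold PWhileCFG.Step at hs
  cases hK : C.kind ℓ with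
  | assign u next =>
    left
    simpa [hGA u next hK] using (hA ℓ u next hK _ hI).2
  | branch φ l1 l2 =>
    right
    rw [hK] at hs
    obtain ⟨rfl, ⟨hφ, rfl⟩ | ⟨hφ, rfl⟩⟩ := hs
    · simp only [reduceCtorEq, if_false]; linarith [((hB ℓ φ _ _ hK _ hI).1 hφ).2]
    · simp only [reduceCtorEq, if_false]; linarith [((hB ℓ φ _ _ hK _ hI).2 hφ).2]
  | nondet l1 l2 =>
    right
    rw [hK] at hs
    obtain ⟨rfl, rfl | rfl⟩ := hs
    · simp only [reduceCtorEq, if_false]; linarith [(hN ℓ _ _ hK _ hI).1.2]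
    · simp only [reduceCtorEq, if_false]; linarith [(hN ℓ _ _ hK _ hI).2.2]
  | prob p l1 l2 =>
    left
    simpa [hGP p l1 l2 hK] using (hP ℓ p l1 l2 hK _ hI).2.2
  | terminal =>
    right
    rw [hK] at hs
    obtain ⟨rfl, rfl⟩ := hs
    simp

theorem le_dsmProc_of_lab_eq_lin (hDSM : IsDSM C I η ε c a b) {ω : Ω}
    (hs : ∀ n, C.Step (lab n ω) (vl n ω) (lab (n + 1) ω) (vl (n + 1) ω)) {n : ℕ}
    (hI : vl n ω ∈ I (lab n ω)) (hn : lab n ω = C.lin) (hout : lab (n + 1) ω ≠ C.lout) :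
    c ≤ dsmProc C η ε lab vl n ω := by
  have h := hs n
  simp only [PWhileCFG.Step, hn, C.entry] at h
  rw [dsmProc_eq_of_lab_eq_lin hs hn, hn]
  rw [hn] at hI
  obtain ⟨-, ⟨hG, -⟩ | ⟨-, hout'⟩⟩ := h
  · exact hDSM.2.2.2.2 _ hI hG
  · exact absurd hout' hout

end IsDSM

end DSMProcess

section DSMSupermartingale

variable {Val SVal L Ω : Type*} {m0 : MeasurableSpace Ω} {μ : Measure Ω} {ℱ : Filtration ℕ m0}
  {C : PWhileCFG Val SVal L} {I : L → Set Val} {η : L → Val → ℝ} {ε c a b : ℝ}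
  {lab : ℕ → Ω → L} {vl : ℕ → Ω → Val}

theorem measurable_ite_kind_eq_terminal
    (hkind : ∀ n K, MeasurableSet[ℱ n] {ω | C.kind (lab n ω) = K}) {k n : ℕ} (hkn : k ≤ n) :
    Measurable[ℱ n] fun ω => if C.kind (lab k ω) = .terminal then (1 : ℝ) else 0 :=
  Measurable.ite (ℱ.mono hkn _ (hkind k _)) measurable_const measurable_const

theorem integrable_ite_kind_eq_terminal [IsFiniteMeasure μ]
    (hkind : ∀ n K, MeasurableSet[ℱ n] {ω | C.kind (lab n ω) = K}) (k : ℕ) :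
    Integrable (fun ω => if C.kind (lab k ω) = .terminal then (1 : ℝ) else 0) μ :=
  (integrable_const (1 : ℝ)).mono'
    ((measurable_ite_kind_eq_terminal hkind le_rfl).mono (ℱ.le k) le_rfl).aestronglyMeasurable
    (ae_of_all μ fun ω => by split_ifs <;> simp)

theorem adapted_dsmProc (hη : Adapted ℱ fun n ω => η (lab n ω) (vl n ω))
    (hkind : ∀ n K, MeasurableSet[ℱ n] {ω | C.kind (lab n ω) = K}) :
    Adapted ℱ (dsmProc C η ε lab vl) := fun n =>
  (hη n).sub (measurable_const.mul (Finset.measurable_sum _ fun _ hk =>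
    measurable_ite_kind_eq_terminal hkind (Finset.mem_range.1 hk).le))

theorem integrable_dsmProc [IsFiniteMeasure μ]
    (hkind : ∀ n K, MeasurableSet[ℱ n] {ω | C.kind (lab n ω) = K})
    (hInt : ∀ n, Integrable (fun ω => η (lab n ω) (vl n ω)) μ) (n : ℕ) :
    Integrable (dsmProc C η ε lab vl n) μ :=
  (hInt n).sub ((integrable_finsetSum _ fun k _ =>
    integrable_ite_kind_eq_terminal hkind k).const_mul ε)

theorem IsDSM.condExp_dsmProc_sub_le [IsFiniteMeasure μ] (hDSM : IsDSM C I η ε c a b)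
    (hη : Adapted ℱ fun n ω => η (lab n ω) (vl n ω))
    (hkind : ∀ n K, MeasurableSet[ℱ n] {ω | C.kind (lab n ω) = K})
    (hInt : ∀ n, Integrable (fun ω => η (lab n ω) (vl n ω)) μ) {n : ℕ}
    (hInv : ∀ᵐ ω ∂μ, vl n ω ∈ I (lab n ω))
    (hs : ∀ᵐ ω ∂μ, C.Step (lab n ω) (vl n ω) (lab (n + 1) ω) (vl (n + 1) ω))
    (hcondAssign : ∀ᵐ ω ∂μ, ∀ u next, C.kind (lab n ω) = LabelKind.assign u next →
        (μ[fun ω' => η (lab (n + 1) ω') (vl (n + 1) ω')|ℱ n]) ω =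
          ∑' s, C.dist s * η next (u (vl n ω) s))
    (hcondProb : ∀ᵐ ω ∂μ, ∀ p l1 l2, C.kind (lab n ω) = LabelKind.prob p l1 l2 →
        (μ[fun ω' => η (lab (n + 1) ω') (vl (n + 1) ω')|ℱ n]) ω =
          p * η l1 (vl n ω) + (1 - p) * η l2 (vl n ω)) :
    μ[dsmProc C η ε lab vl (n + 1) - dsmProc C η ε lab vl n|ℱ n] ≤ᵐ[μ] fun _ => -ε := by
  set Y := fun ω => η (lab (n + 1) ω) (vl (n + 1) ω)
  set Z := fun ω => η (lab n ω) (vl n ω) + ε * if C.kind (lab n ω) = .terminal then 1 else 0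
  have hZ : StronglyMeasurable[ℱ n] Z := ((hη n).add (measurable_const.mul
    (measurable_ite_kind_eq_terminal hkind le_rfl))).stronglyMeasurable
  have hZi : Integrable Z μ :=
    (hInt n).add ((integrable_ite_kind_eq_terminal hkind n).const_mul ε)
  have hYZ : μ[Y|ℱ n] ≤ᵐ[μ] fun ω => Z ω - ε := by
    refine condExp_ae_le_of_ae_or (ℱ.le n) (hInt (n + 1)) (hZ.sub stronglyMeasurable_const)
      (hZi.sub (integrable_const ε)) ?_
    filter_upwards [hInv, hs, hcondAssign, hcondProb] with ω hI hsω hA hP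
    exact hDSM.expected_or_next_le hI hsω hA hP
  have hdiff : dsmProc C η ε lab vl (n + 1) - dsmProc C η ε lab vl n = Y - Z := by
    ext ω
    rw [Pi.sub_apply, dsmProc_succ_sub]
    simp only [Y, Z, Pi.sub_apply]
    ring
  rw [hdiff]
  filter_upwards [condExp_sub (hInt (n + 1)) hZi (ℱ n), hYZ] with ω h1 h2
  rw [h1, Pi.sub_apply, condExp_of_stronglyMeasurable (ℱ.le n) hZ hZi]
  linarith

end DSMSupermartingale

theorem stmt15_general {Val SVal L Ω : Type*}
    {m0 : MeasurableSpace Ω} {μ : Measure Ω} [IsProbabilityMeasure μ]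
    (C : PWhileCFG Val SVal L) (I : L → Set Val) (η : L → Val → ℝ) (ε c a b : ℝ)
    (hε : 0 < ε) (haε : a ≤ -ε) (hεb : -ε ≤ b)
    (hDSM : IsDSM C I η ε c a b)
    (ℱ : Filtration ℕ m0) (lab : ℕ → Ω → L) (vl : ℕ → Ω → Val)
    -- measurability/adaptedness of the run
    (hAdapted : Adapted ℱ (fun n ω => η (lab n ω) (vl n ω)))
    (hkind : ∀ n K, MeasurableSet[ℱ n] {ω | C.kind (lab n ω) = K})
    (hInt : ∀ n, Integrable (fun ω => η (lab n ω) (vl n ω)) μ)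
    -- the invariant holds along the run
    (hInv : ∀ n, ∀ᵐ ω ∂μ, vl n ω ∈ I (lab n ω))
    -- the run follows the MDP semantics of the control-flow graph
    (hstepAssign : ∀ n, ∀ᵐ ω ∂μ, ∀ u next, C.kind (lab n ω) = LabelKind.assign u next →
        lab (n + 1) ω = next ∧ ∃ s, vl (n + 1) ω = u (vl n ω) s)
    (hstepBranch : ∀ n, ∀ᵐ ω ∂μ, ∀ φ l1 l2, C.kind (lab n ω) = LabelKind.branch φ l1 l2 →
        vl (n + 1) ω = vl n ω ∧
          ((φ (vl n ω) ∧ lab (n + 1) ω = l1) ∨ (¬ φ (vl n ω) ∧ lab (n + 1) ω = l2)))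
    (hstepNondet : ∀ n, ∀ᵐ ω ∂μ, ∀ l1 l2, C.kind (lab n ω) = LabelKind.nondet l1 l2 →
        vl (n + 1) ω = vl n ω ∧ (lab (n + 1) ω = l1 ∨ lab (n + 1) ω = l2))
    (hstepProb : ∀ n, ∀ᵐ ω ∂μ, ∀ p l1 l2, C.kind (lab n ω) = LabelKind.prob p l1 l2 →
        vl (n + 1) ω = vl n ω ∧ (lab (n + 1) ω = l1 ∨ lab (n + 1) ω = l2))
    (hstepTerm : ∀ n, ∀ᵐ ω ∂μ, C.kind (lab n ω) = LabelKind.terminal →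
        lab (n + 1) ω = lab n ω ∧ vl (n + 1) ω = vl n ω)
    -- the conditional one-step law of the run, at sampling and probabilistic labels
    (hcondAssign : ∀ n, ∀ᵐ ω ∂μ, ∀ u next, C.kind (lab n ω) = LabelKind.assign u next →
        (μ[fun ω' => η (lab (n + 1) ω') (vl (n + 1) ω')|ℱ n]) ω =
          ∑' s, C.dist s * η next (u (vl n ω) s))
    (hcondProb : ∀ n, ∀ᵐ ω ∂μ, ∀ p l1 l2, C.kind (lab n ω) = LabelKind.prob p l1 l2 →
        (μ[fun ω' => η (lab (n + 1) ω') (vl (n + 1) ω')|ℱ n]) ω =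
          p * η l1 (vl n ω) + (1 - p) * η l2 (vl n ω))
    -- the loop body P' terminates almost surely (for every initial valuation and scheduler):
    -- almost surely, the run either terminates or returns to the loop head infinitely often
    (hBody : ∀ᵐ ω ∂μ,
        (∃ n, lab n ω = C.lout) ∨ {n : ℕ | lab n ω = C.lin}.Infinite) :
    μ {ω | ∃ n, lab n ω = C.lout} = 1 := by
  set X := dsmProc C η ε lab vl
  have hstep : ∀ n, ∀ᵐ ω ∂μ, C.Step (lab n ω) (vl n ω) (lab (n + 1) ω) (vl (n + 1) ω) := by
    intro n
    filter_upwards [hstepAssign n, hstepBranch n, hstepNondet n, hstepProb n, hstepTerm n]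
      with ω hA hB hN hP hT
    rw [PWhileCFG.Step]
    split <;> simp_all
  have hinc : ∀ᵐ ω ∂μ, ∀ n, |X (n + 1) ω - X n ω| ≤ max |a| |b| := by
    filter_upwards [ae_all_iff.2 hInv, ae_all_iff.2 hstep] with ω hI hs n
    have h := hDSM.sub_mem_Icc_of_step haε hεb (hI n) (hs n)
    rw [← dsmProc_succ_sub] at h
    exact abs_le_max_abs_abs h.1 h.2
  have hX : ∀ᵐ ω ∂μ, Tendsto (X · ω) atTop atBot :=
    ae_tendsto_atBot_of_condExp_sub_le hε (adapted_dsmProc hAdapted hkind).stronglyAdapted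
      (integrable_dsmProc hkind hInt) hinc fun n => hDSM.condExp_dsmProc_sub_le hAdapted hkind
        hInt (hInv n) (hstep n) (hcondAssign n) (hcondProb n)
  have hterm : ∀ᵐ ω ∂μ, ∃ n, lab n ω = C.lout := by
    filter_upwards [hBody, hX, ae_all_iff.2 hInv, ae_all_iff.2 hstep] with ω hBω hXω hI hs
    by_contra hnt
    have hvisits := Nat.frequently_atTop_iff_infinite.2 (hBω.resolve_left hnt)
    obtain ⟨n, hlin, hlt⟩ :=
      (hvisits.and_eventually (hXω.eventually (eventually_lt_atBot c))).exists
    exact not_le.2 hlt (hDSM.le_dsmProc_of_lab_eq_lin hs (hI n) hlin fun h => hnt ⟨n + 1, h⟩)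
  exact (measure_congr (ae_eq_univ.2 hterm)).trans measure_univ

/-- Soundness of DSM-maps: Let `P = while (G, P')` be a probabilistic while
loop (given by its control-flow graph `C`) such that the loop body `P'` terminates almost
surely for every initial valuation and scheduler (so that along any run, almost surely the
run either reaches the terminal label or revisits the loop head `lin` infinitely often), and
suppose there exists a DSM-map `η` for `P` with parameters `ε > 0`, `c`, and interval
`[a, b]`.  Then for every initial valuation `ν*` and every scheduler — i.e. for every process
`(ℓ n, ν n)` consistent with the MDP semantics of `C` started at `(lin, ν*)` — the program
terminates almost surely: `P(T < ∞) = 1`, i.e. the run reaches the terminal label `lout`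
with probability `1`. -/
theorem stmt15 {Val SVal L Ω : Type*} [Countable SVal]
    {m0 : MeasurableSpace Ω} {μ : Measure Ω} [IsProbabilityMeasure μ]
    (C : PWhileCFG Val SVal L) (I : L → Set Val) (η : L → Val → ℝ) (ε c a b : ℝ)
    (hε : 0 < ε) (hab : a < b) (haε : a ≤ -ε) (hεb : -ε ≤ b)
    (hDSM : IsDSM C I η ε c a b)
    (ℱ : Filtration ℕ m0) (lab : ℕ → Ω → L) (vl : ℕ → Ω → Val) (ν₀ : Val)
    -- the run starts at the loop head with the initial valuation ν₀
    (hstart : (∀ ω, lab 0 ω = C.lin) ∧ (∀ ω, vl 0 ω = ν₀))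
    -- measurability/adaptedness of the run
    (hAdapted : Adapted ℱ (fun n ω => η (lab n ω) (vl n ω)))
    (hkind : ∀ n K, MeasurableSet[ℱ n] {ω | C.kind (lab n ω) = K})
    (hlab : ∀ n ℓ, MeasurableSet[ℱ n] {ω | lab n ω = ℓ})
    (hInt : ∀ n, Integrable (fun ω => η (lab n ω) (vl n ω)) μ)
    -- the invariant holds along the run
    (hInv : ∀ n, ∀ᵐ ω ∂μ, vl n ω ∈ I (lab n ω))
    -- the run follows the MDP semantics of the control-flow graph
    (hstepAssign : ∀ n, ∀ᵐ ω ∂μ, ∀ u next, C.kind (lab n ω) = LabelKind.assign u next →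
        lab (n + 1) ω = next ∧ ∃ s, vl (n + 1) ω = u (vl n ω) s)
    (hstepBranch : ∀ n, ∀ᵐ ω ∂μ, ∀ φ l1 l2, C.kind (lab n ω) = LabelKind.branch φ l1 l2 →
        vl (n + 1) ω = vl n ω ∧
          ((φ (vl n ω) ∧ lab (n + 1) ω = l1) ∨ (¬ φ (vl n ω) ∧ lab (n + 1) ω = l2)))
    (hstepNondet : ∀ n, ∀ᵐ ω ∂μ, ∀ l1 l2, C.kind (lab n ω) = LabelKind.nondet l1 l2 →
        vl (n + 1) ω = vl n ω ∧ (lab (n + 1) ω = l1 ∨ lab (n + 1) ω = l2))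
    (hstepProb : ∀ n, ∀ᵐ ω ∂μ, ∀ p l1 l2, C.kind (lab n ω) = LabelKind.prob p l1 l2 →
        vl (n + 1) ω = vl n ω ∧ (lab (n + 1) ω = l1 ∨ lab (n + 1) ω = l2))
    (hstepTerm : ∀ n, ∀ᵐ ω ∂μ, C.kind (lab n ω) = LabelKind.terminal →
        lab (n + 1) ω = lab n ω ∧ vl (n + 1) ω = vl n ω)
    -- the conditional one-step law of the run, at sampling and probabilistic labels
    (hcondAssign : ∀ n, ∀ᵐ ω ∂μ, ∀ u next, C.kind (lab n ω) = LabelKind.assign u next →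
        (μ[fun ω' => η (lab (n + 1) ω') (vl (n + 1) ω')|ℱ n]) ω =
          ∑' s, C.dist s * η next (u (vl n ω) s))
    (hcondProb : ∀ n, ∀ᵐ ω ∂μ, ∀ p l1 l2, C.kind (lab n ω) = LabelKind.prob p l1 l2 →
        (μ[fun ω' => η (lab (n + 1) ω') (vl (n + 1) ω')|ℱ n]) ω =
          p * η l1 (vl n ω) + (1 - p) * η l2 (vl n ω))
    -- the loop body P' terminates almost surely (for every initial valuation and scheduler):
    -- almost surely, the run either terminates or returns to the loop head infinitely often
    (hBody : ∀ᵐ ω ∂μ,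
        (∃ n, lab n ω = C.lout) ∨ {n : ℕ | lab n ω = C.lin}.Infinite) :
    μ {ω | ∃ n, lab n ω = C.lout} = 1 :=
  stmt15_general C I η ε c a b hε haε hεb hDSM ℱ lab vl hAdapted hkind hInt hInv hstepAssign
    hstepBranch hstepNondet hstepProb hstepTerm hcondAssign hcondProb hBody
end
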